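/- For all integers k ≥ 4 and l ≥ 1 and every sufficiently large integer d there exists a result F of a collision in degree d of the germ at the origin of the D_k-singularity {u·v²+u^{k−1}=0} and the germ at the origin of the A_l-singularity {u²+v^{l+1}=0}, such that the germ of {F=0} at the origin is topologically equivalent to the germ at the origin of the D_{k+l+1}-singularity {u·v²+u^{k+l}=0}. -/

import Mathlib

/-!
Deform the `D_(k+l+1)`-singularity by `F_t = u v² + u^(k-1) (u - t)^(l+1)`. For `t ≠ 0`, near the
origin `(u - t)^(l+1)` is a unit, so there is a continuous `g` with `g² (u - t)^(l+1) = 1`, and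
`F_t = (u - t)^(l+1) (u (g v)² + u^(k-1))`, so `(u, v) ↦ (u, g(u) v)` carries the germ of `F_t`
at `0` to `D_k`. Near `(t, 0)` the factor `u^(k-1)` is a unit and, with `a² u^(k-2) = 1`,
`F_t = u^(k-1) ((a v)² + (u - t)^(l+1))`, so `(u, v) ↦ (a(u) v, u - t)` carries the germ at
`(t, 0)` to `A_l`. The coefficients of `F_t` are polynomials in `t`, so `F_t → F_0` as `t → 0`.
-/

open MvPolynomial Filter

noncomputable section

/-- Points of the complex plane ℂ². -/
abbrev Pt : Type := Fin 2 → ℂ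

/-- Polynomials in the two variables `u = X 0`, `v = X 1` over ℂ. -/
abbrev Poly2 : Type := MvPolynomial (Fin 2) ℂ

/-- The zero set of a polynomial in ℂ². -/
def zeroSet (f : Poly2) : Set Pt := {p | eval p f = 0}

/-- The germs `(V, a)` and `(W, b)` of plane curves are topologically equivalent:
there are open neighbourhoods `U ∋ a`, `U' ∋ b` and a homeomorphism `φ : U ≃ₜ U'`
with `φ a = b` carrying `V ∩ U` onto `W ∩ U'`. -/
def GermEquiv (V : Set Pt) (a : Pt) (W : Set Pt) (b : Pt) : Prop :=
  ∃ (U U' : Set Pt), IsOpen U ∧ IsOpen U' ∧ b ∈ U' ∧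
    ∃ (φ : U ≃ₜ U') (ha : a ∈ U),
      ((φ ⟨a, ha⟩ : U') : Pt) = b ∧
      ∀ x : U, (x : Pt) ∈ V ↔ ((φ x : U') : Pt) ∈ W

/-- The polynomial `f (a + ·)`, i.e. `f` translated so that `a` becomes the origin. -/
def shiftBy (a : Pt) (f : Poly2) : Poly2 := bind₁ (fun i => X i + C (a i)) f

/-- The multiplicity `mult_a f`: the least total degree of a monomial occurring
in the Taylor expansion of `f` at `a`. -/
def multAt (a : Pt) (f : Poly2) : ℕ :=
  sInf {n | homogeneousComponent n (shiftBy a f) ≠ 0}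

/-- The lowest form of `f` at `a`: the homogeneous part of `f (a + ·)` of degree `mult_a f`. -/
def lowestForm (a : Pt) (f : Poly2) : Poly2 :=
  homogeneousComponent (multAt a f) (shiftBy a f)

/-- `F` (of degree ≤ d) is a result of a collision in degree `d` of the germs at the origin
of `{fx = 0}` and `{fy = 0}`: there are curves `{Fₙ = 0}` of degree ≤ d having a singular
point of the topological type of `fx` at the origin and one of the topological type of `fy`
at a point `yₙ ≠ 0`, with `yₙ → 0` and `Fₙ → F` coefficient-wise. -/
def IsCollisionResult (d : ℕ) (fx fy F : Poly2) : Prop :=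
  F.totalDegree ≤ d ∧
  ∃ (Fs : ℕ → Poly2) (y : ℕ → Pt),
    (∀ n, (Fs n).totalDegree ≤ d) ∧
    (∀ n, y n ≠ 0) ∧
    Tendsto y atTop (nhds 0) ∧
    (∀ m : Fin 2 →₀ ℕ, Tendsto (fun n => coeff m (Fs n)) atTop (nhds (coeff m F))) ∧
    (∀ n, GermEquiv (zeroSet (Fs n)) 0 (zeroSet fx) 0) ∧
    (∀ n, GermEquiv (zeroSet (Fs n)) (y n) (zeroSet fy) 0)

open scoped Polynomial

theorem germEquiv_refl (V : Set Pt) (a : Pt) : GermEquiv V a V a :=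
  ⟨Set.univ, Set.univ, isOpen_univ, isOpen_univ, trivial, Homeomorph.refl _, trivial, rfl,
    fun _ => Iff.rfl⟩

theorem germEquiv_of_openPartialHomeomorph {V W : Set Pt} {a b : Pt}
    (e : OpenPartialHomeomorph Pt Pt) (ha : a ∈ e.source) (hab : e a = b)
    (hVW : ∀ p ∈ e.source, p ∈ V ↔ e p ∈ W) : GermEquiv V a W b :=
  ⟨e.source, e.target, e.open_source, e.open_target, hab ▸ e.map_source ha,
    e.toHomeomorphSourceTarget, ha, hab, fun x => hVW x x.2⟩

theorem germEquiv_zeroSet_of_eval_eq_mul {F G : Poly2} {a b : Pt}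
    (e : OpenPartialHomeomorph Pt Pt) (ha : a ∈ e.source) (hab : e a = b) (c : Pt → ℂ)
    (hc : ∀ p ∈ e.source, c p ≠ 0) (hFG : ∀ p ∈ e.source, eval p F = c p * eval (e p) G) :
    GermEquiv (zeroSet F) a (zeroSet G) b :=
  germEquiv_of_openPartialHomeomorph e ha hab fun p hp => by
    simp only [zeroSet, Set.mem_ofPred_eq, hFG p hp, mul_eq_zero, hc p hp, false_or]

def scaleFiber (h : ℂ → ℂ) (S : Set ℂ) (hS : IsOpen S) (hh : ContinuousOn h S)
    (h0 : ∀ u ∈ S, h u ≠ 0) : OpenPartialHomeomorph Pt Pt where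
  toFun p := ![p 0, p 1 * h (p 0)]
  invFun p := ![p 0, p 1 / h (p 0)]
  source := {p | p 0 ∈ S}
  target := {p | p 0 ∈ S}
  map_source' _ hp := hp
  map_target' _ hp := hp
  left_inv' p hp := by ext i; fin_cases i <;> simp [h0 _ hp]
  right_inv' p hp := by ext i; fin_cases i <;> simp [h0 _ hp]
  open_source := hS.preimage (continuous_apply 0)
  open_target := hS.preimage (continuous_apply 0)
  continuousOn_toFun := by
    have := hh.comp (continuous_apply (A := fun _ : Fin 2 => ℂ) 0).continuousOn fun _ hp => hp
    rw [continuousOn_pi]; intro i; fin_cases i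
    · exact (continuous_apply 0).continuousOn
    · exact (continuous_apply 1).continuousOn.mul this
  continuousOn_invFun := by
    have := hh.comp (continuous_apply (A := fun _ : Fin 2 => ℂ) 0).continuousOn fun _ hp => hp
    rw [continuousOn_pi]; intro i; fin_cases i
    · exact (continuous_apply 0).continuousOn
    · exact (continuous_apply 1).continuousOn.div this fun p hp => h0 _ hp

def swapSubFst (t : ℂ) : Pt ≃ₜ Pt where
  toFun p := ![p 1, p 0 - t]
  invFun q := ![q 1 + t, q 0]
  left_inv p := by ext i; fin_cases i <;> simp
  right_inv q := by ext i; fin_cases i <;> simp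
  continuous_toFun := by fun_prop
  continuous_invFun := by fun_prop

theorem exists_continuousOn_sq_mul_pow_eq_one {c : ℂ} (hc : c ≠ 0) (n : ℕ) :
    ∃ h : ℂ → ℂ, ContinuousOn h (Metric.ball c ‖c‖) ∧
      ∀ u ∈ Metric.ball c ‖c‖, h u ^ 2 * u ^ n = 1 := by
  have hslit : ∀ u ∈ Metric.ball c ‖c‖, u / c ∈ Complex.slitPlane := fun u hu => by
    have : ‖(u - c) / c‖ < 1 := by
      rwa [norm_div, div_lt_one (norm_pos_iff.2 hc), ← dist_eq_norm]
    rw [show u / c = 1 + (u - c) / c by field_simp; ring]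
    exact Complex.mem_slitPlane_of_norm_lt_one this
  refine ⟨fun u => Complex.exp (-n * (Complex.log c + Complex.log (u / c)) / 2), ?_, ?_⟩
  · exact fun u hu => ContinuousAt.continuousWithinAt <|
      (((continuousAt_const.add ((continuousAt_id.div_const c).clog (hslit u hu))).const_mul
        _).div_const _).cexp
  · intro u hu
    have hu0 : u ≠ 0 := by
      rintro rfl; simp at hu
    have hlog : Complex.exp (Complex.log c + Complex.log (u / c)) = u := by
      rw [Complex.exp_add, Complex.exp_log hc, Complex.exp_log (div_ne_zero hu0 hc)]
      field_simp
    have key : ∀ L : ℂ, Complex.exp (-n * L / 2) ^ 2 * Complex.exp L ^ n = 1 := fun L => by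
      rw [← Complex.exp_nat_mul, ← Complex.exp_nat_mul, ← Complex.exp_add,
        ← Complex.exp_zero]
      congr 1; push_cast; ring
    simpa only [hlog] using key (Complex.log c + Complex.log (u / c))

theorem totalDegree_map_le {R S σ : Type*} [CommSemiring R] [CommSemiring S] (f : R →+* S)
    (p : MvPolynomial σ R) : (map f p).totalDegree ≤ p.totalDegree :=
  Finset.sup_mono (support_map_subset f p)

theorem isCollisionResult_map_evalRingHom_zero {d : ℕ} {fx fy : Poly2}
    (Q : MvPolynomial (Fin 2) ℂ[X]) (hQ : Q.totalDegree ≤ d) (y : ℂ → Pt)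
    (hy : Continuous y) (hy0 : y 0 = 0) (hy_ne : ∀ t ≠ 0, y t ≠ 0)
    (hfx : ∀ t ≠ 0, GermEquiv (zeroSet (map (Polynomial.evalRingHom t) Q)) 0 (zeroSet fx) 0)
    (hfy : ∀ t ≠ 0,
      GermEquiv (zeroSet (map (Polynomial.evalRingHom t) Q)) (y t) (zeroSet fy) 0) :
    IsCollisionResult d fx fy (map (Polynomial.evalRingHom 0) Q) := by
  set t : ℕ → ℂ := fun n => 1 / ((n : ℂ) + 1)
  have ht : Tendsto t atTop (nhds 0) := tendsto_one_div_add_atTop_nhds_zero_nat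
  have ht_ne : ∀ n, t n ≠ 0 := fun n => one_div_ne_zero (Nat.cast_add_one_ne_zero n)
  refine ⟨(totalDegree_map_le _ Q).trans hQ, fun n => map (Polynomial.evalRingHom (t n)) Q,
    fun n => y (t n), fun n => (totalDegree_map_le _ Q).trans hQ, fun n => hy_ne _ (ht_ne n),
    hy0 ▸ (hy.tendsto 0).comp ht, fun m => ?_, fun n => hfx _ (ht_ne n),
    fun n => hfy _ (ht_ne n)⟩
  simp only [coeff_map, Polynomial.coe_evalRingHom]
  exact ((coeff m Q).continuous.tendsto 0).comp ht

/-- The deformation parameter `t` is the variable of the coefficient ring `ℂ[X]`; the member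
`F_t` of the family is `map (Polynomial.evalRingHom t) (dkAlFamily k l)`. -/
def dkAlFamily (k l : ℕ) : MvPolynomial (Fin 2) ℂ[X] :=
  X 0 * X 1 ^ 2 + X 0 ^ (k - 1) * (X 0 - C Polynomial.X) ^ (l + 1)

theorem totalDegree_dkAlFamily_le {k : ℕ} (hk : 1 ≤ k) (l : ℕ) :
    (dkAlFamily k l).totalDegree ≤ max 3 (k + l) := by
  have hX : ∀ i, (X i : MvPolynomial (Fin 2) ℂ[X]).totalDegree = 1 := totalDegree_X
  have hsub : (X 0 - C Polynomial.X : MvPolynomial (Fin 2) ℂ[X]).totalDegree ≤ 1 :=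
    (totalDegree_sub_C_le _ _).trans (hX 0).le
  refine (totalDegree_add _ _).trans (max_le_max ?_ ?_)
  · calc _ ≤ 1 + 2 * 1 := (totalDegree_mul _ _).trans
          (add_le_add (hX 0).le ((totalDegree_pow _ _).trans (by rw [hX])))
      _ = 3 := rfl
  · calc _ ≤ (k - 1) * 1 + (l + 1) * 1 := (totalDegree_mul _ _).trans
          (add_le_add ((totalDegree_pow _ _).trans (by rw [hX]))
            ((totalDegree_pow _ _).trans (Nat.mul_le_mul_left _ hsub)))
      _ = k + l := by omega

theorem eval_map_evalRingHom_dkAlFamily (k l : ℕ) (t : ℂ) (p : Pt) :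
    eval p (map (Polynomial.evalRingHom t) (dkAlFamily k l)) =
      p 0 * p 1 ^ 2 + p 0 ^ (k - 1) * (p 0 - t) ^ (l + 1) := by
  simp [dkAlFamily]

theorem map_evalRingHom_zero_dkAlFamily {k : ℕ} (hk : 1 ≤ k) (l : ℕ) :
    map (Polynomial.evalRingHom 0) (dkAlFamily k l) = X 0 * X 1 ^ 2 + X 0 ^ (k + l) := by
  simp only [dkAlFamily, map_add, map_mul, map_pow, map_sub, map_X, map_C,
    Polynomial.coe_evalRingHom, Polynomial.eval_X, map_zero, sub_zero, ← pow_add]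
  rw [show k - 1 + (l + 1) = k + l by omega]

theorem germEquiv_dkAlFamily_origin (k l : ℕ) {t : ℂ} (ht : t ≠ 0) :
    GermEquiv (zeroSet (map (Polynomial.evalRingHom t) (dkAlFamily k l))) 0
      (zeroSet (X 0 * X 1 ^ 2 + X 0 ^ (k - 1))) 0 := by
  obtain ⟨g, hg_cont, hg⟩ := exists_continuousOn_sq_mul_pow_eq_one (neg_ne_zero.2 ht) (l + 1)
  set S : Set ℂ := (· - t) ⁻¹' Metric.ball (-t) ‖-t‖
  have hS : IsOpen S := Metric.isOpen_ball.preimage (by fun_prop)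
  have hgS : ∀ u ∈ S, g (u - t) ^ 2 * (u - t) ^ (l + 1) = 1 := fun u hu => hg _ hu
  let e := scaleFiber (fun u => g (u - t)) S hS
    (hg_cont.comp (by fun_prop) fun _ hu => hu)
    fun u hu => ne_zero_pow two_ne_zero (left_ne_zero_of_mul_eq_one (hgS u hu))
  have he0 : e 0 = 0 := by ext i; fin_cases i <;> simp [e, scaleFiber]
  have h0 : (0 : Pt) ∈ e.source := by simpa [e, scaleFiber, S] using ht
  refine germEquiv_zeroSet_of_eval_eq_mul e h0 he0 (fun p => (p 0 - t) ^ (l + 1))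
    (fun p hp => right_ne_zero_of_mul_eq_one (hgS _ hp)) fun p hp => ?_
  simp only [eval_map_evalRingHom_dkAlFamily, e, scaleFiber, OpenPartialHomeomorph.coe_mk,
    map_add, map_mul, map_pow, eval_X, Matrix.cons_val_zero, Matrix.cons_val_one,
    Matrix.cons_val_fin_one]
  linear_combination (-(p 0 * p 1 ^ 2)) * hgS _ hp

theorem germEquiv_dkAlFamily_movingPoint {k : ℕ} (hk : 2 ≤ k) (l : ℕ) {t : ℂ}
    (ht : t ≠ 0) :
    GermEquiv (zeroSet (map (Polynomial.evalRingHom t) (dkAlFamily k l))) ![t, 0]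
      (zeroSet (X 0 ^ 2 + X 1 ^ (l + 1))) 0 := by
  obtain ⟨a, ha_cont, ha⟩ := exists_continuousOn_sq_mul_pow_eq_one ht (k - 2)
  set S : Set ℂ := Metric.ball t ‖t‖
  have hS0 : ∀ u ∈ S, u ≠ 0 := by
    rintro u hu rfl; simp [S] at hu
  let e := (scaleFiber a S Metric.isOpen_ball ha_cont fun u hu =>
    ne_zero_pow two_ne_zero (left_ne_zero_of_mul_eq_one (ha u hu))).transHomeomorph (swapSubFst t)
  have he : e ![t, 0] = 0 := by ext i; fin_cases i <;> simp [e, scaleFiber, swapSubFst]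
  have ht_mem : ![t, 0] ∈ e.source := by simpa [e, scaleFiber, S] using ht
  refine germEquiv_zeroSet_of_eval_eq_mul e ht_mem he (fun p => p 0 ^ (k - 1))
    (fun p hp => pow_ne_zero _ (hS0 _ hp)) fun p hp => ?_
  have hpow : p 0 ^ (k - 1) = p 0 ^ (k - 2) * p 0 := by
    rw [← pow_succ]; congr 1; omega
  simp only [eval_map_evalRingHom_dkAlFamily, e, scaleFiber, swapSubFst,
    OpenPartialHomeomorph.transHomeomorph_apply, Homeomorph.homeomorph_mk_coe, Equiv.coe_fn_mk,
    OpenPartialHomeomorph.coe_mk, Function.comp_apply, map_add, map_pow, eval_X,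
    Matrix.cons_val_zero, Matrix.cons_val_one, Matrix.cons_val_fin_one]
  rw [hpow]
  linear_combination (-(p 0 * p 1 ^ 2)) * ha _ hp

theorem Dk_plus_Al_collision_general (k l : ℕ) (hk : 4 ≤ k) :
    ∃ D : ℕ, ∀ d : ℕ, D ≤ d → ∃ F : Poly2,
      IsCollisionResult d (X 0 * X 1 ^ 2 + X 0 ^ (k-1)) (X 0 ^ 2 + X 1 ^ (l+1)) F ∧
      GermEquiv (zeroSet F) 0 (zeroSet (X 0 * X 1 ^ 2 + X 0 ^ (k+l))) 0 := by
  refine ⟨max 3 (k + l), fun d hd =>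
    ⟨map (Polynomial.evalRingHom 0) (dkAlFamily k l), ?_, ?_⟩⟩
  · exact isCollisionResult_map_evalRingHom_zero _
      ((totalDegree_dkAlFamily_le (by omega) l).trans hd) (fun t => ![t, 0])
      (by fun_prop) (by simp) (fun t ht h => ht (congrFun h 0))
      (fun t ht => germEquiv_dkAlFamily_origin k l ht)
      (fun t ht => germEquiv_dkAlFamily_movingPoint (by omega) l ht)
  · rw [map_evalRingHom_zero_dkAlFamily (by omega)]
    exact germEquiv_refl _ _

/-- For all `k ≥ 4`, `l ≥ 1`, for every sufficiently large degree `d` there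
is a result of a collision in degree `d` of a `D_k`-singularity `u·v² + u^(k−1)` and an
`A_l`-singularity `u² + v^(l+1)` whose germ at the origin is topologically equivalent to the
`D_(k+l+1)`-singularity `u·v² + u^(k+l)`. -/
theorem Dk_plus_Al_collision (k l : ℕ) (hk : 4 ≤ k) (hl : 1 ≤ l) :
    ∃ D : ℕ, ∀ d : ℕ, D ≤ d → ∃ F : Poly2,
      IsCollisionResult d (X 0 * X 1 ^ 2 + X 0 ^ (k-1)) (X 0 ^ 2 + X 1 ^ (l+1)) F ∧
      GermEquiv (zeroSet F) 0 (zeroSet (X 0 * X 1 ^ 2 + X 0 ^ (k+l))) 0 :=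
  Dk_plus_Al_collision_general k l hk

end
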